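/- Let S be a subset of a projective set in general position on S², with S not contained in a great circle, and let f be a symmetry of S with f(p) = p and f(q) = q for distinct, non-antipodal points p, q ∈ S. Then f is the identity on S. -/

import Mathlib

open scoped RealInnerProductSpace

noncomputable section

abbrev E3 := EuclideanSpace ℝ (Fin 3)

/-- Determinant of the 3×3 matrix whose rows are `p`, `q`, `r`. -/
def det3 (p q r : E3) : ℝ := Matrix.det (Matrix.of ![fun i => p i, fun i => q i, fun i => r i])

/-- The orientation `sgn(p,q,r)` of a triple of points: the sign of `det3 p q r`. -/
def sgn3 (p q r : E3) : ℝ := Real.sign (det3 p q r)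

/-- A projective set: a finite, antipodally symmetric subset of the unit sphere. -/
def IsProjectiveSet (P : Set E3) : Prop :=
  P.Finite ∧ P ⊆ Metric.sphere (0 : E3) 1 ∧ ∀ p ∈ P, -p ∈ P

/-- General position for a projective set: whenever three of its points are coplanar with
the origin, two of them are antipodal. -/
def ProjGenPos (P : Set E3) : Prop :=
  ∀ p ∈ P, ∀ q ∈ P, ∀ r ∈ P, p ≠ q → p ≠ r → q ≠ r → det3 p q r = 0 →
    (p = -q ∨ p = -r ∨ q = -r)

/-!
Once `f` fixes two points `a, b ∈ S`, it preserves the open half-space `det3 a b x > 0` of `S`, and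
on that half-space `det3 a u v > 0` is a strict total order: transitivity is a Plücker relation,
totality is general position. An order automorphism of a finite linear order is the identity, so
`f` fixes both open half-spaces. A point `r ∈ S` off the plane of `p, q` exists because `S` is not
in a great circle; the only points of `S` left in that plane are `±p, ±q`, and `-p`, `-q` lie off
the planes of `q, r` and of `p, r` respectively.
-/

open scoped Matrix

theorem Set.BijOn.eqOn_id_of_strictTotal {α : Type*} {T : Set α} (hT : T.Finite) {g : α → α}
    (hg : Set.BijOn g T T) {R : α → α → Prop} (hR : ∀ x ∈ T, ∀ y ∈ T, R (g x) (g y) ↔ R x y)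
    (irrefl : ∀ x ∈ T, ¬ R x x) (trans : ∀ x ∈ T, ∀ y ∈ T, ∀ z ∈ T, R x y → R y z → R x z)
    (total : ∀ x ∈ T, ∀ y ∈ T, x ≠ y → R x y ∨ R y x) :
    Set.EqOn g id T := by
  set below : α → Set α := fun x => {y ∈ T | R y x}
  have image_below : ∀ x ∈ T, g '' below x = below (g x) := by
    intro x hx
    ext y
    constructor
    · rintro ⟨z, ⟨hz, hzx⟩, rfl⟩
      exact ⟨hg.mapsTo hz, (hR z hz x hx).2 hzx⟩
    · rintro ⟨hy, hyx⟩
      obtain ⟨z, hz, rfl⟩ := hg.surjOn hy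
      exact ⟨z, ⟨hz, (hR z hz x hx).1 hyx⟩, rfl⟩
  have ncard_below_map : ∀ x ∈ T, (below (g x)).ncard = (below x).ncard := fun x hx => by
    rw [← image_below x hx, (hg.injOn.mono (Set.sep_subset _ _)).ncard_image]
  have ncard_below_lt : ∀ x ∈ T, ∀ y ∈ T, R x y → (below x).ncard < (below y).ncard := by
    intro x hx y hy hxy
    refine Set.ncard_lt_ncard ?_ (hT.subset (Set.sep_subset _ _))
    have hsub : below x ⊆ below y := fun z hz => ⟨hz.1, trans z hz.1 x hx y hy hz.2 hxy⟩
    exact (Set.ssubset_iff_of_subset hsub).2 ⟨x, ⟨hx, hxy⟩, fun h => irrefl x hx h.2⟩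
  intro x hx
  by_contra hne
  rcases total (g x) (hg.mapsTo hx) x hx hne with h | h
  · exact (ncard_below_lt _ (hg.mapsTo hx) x hx h).ne (ncard_below_map x hx)
  · exact (ncard_below_lt x hx _ (hg.mapsTo hx) h).ne (ncard_below_map x hx).symm

theorem Set.BijOn.sep {α : Type*} {S : Set α} {g : α → α} (hg : Set.BijOn g S S)
    {Q : α → Prop} (hQ : ∀ x ∈ S, Q (g x) ↔ Q x) :
    Set.BijOn g {x ∈ S | Q x} {x ∈ S | Q x} :=
  ⟨fun x hx => ⟨hg.mapsTo hx.1, (hQ x hx.1).2 hx.2⟩, hg.injOn.mono (Set.sep_subset _ _),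
    fun y hy => by
      obtain ⟨x, hx, rfl⟩ := hg.surjOn hy.1
      exact ⟨x, ⟨hx, (hQ x hx).1 hy.2⟩, rfl⟩⟩

theorem Real.sign_eq_one_iff {r : ℝ} : Real.sign r = 1 ↔ 0 < r := by
  unfold Real.sign
  split_ifs with h₁ h₂ <;> norm_num <;> linarith

theorem eq_or_eq_neg_of_smul_eq {V : Type*} [NormedAddCommGroup V] [NormedSpace ℝ V] {p q : V}
    (hp : ‖p‖ = 1) (hq : ‖q‖ = 1) {c : ℝ} (h : c • p = q) : q = p ∨ q = -p := by
  have hc : |c| = 1 := by rw [← hq, ← h, norm_smul, hp, Real.norm_eq_abs, mul_one]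
  rcases abs_eq (zero_le_one' ℝ) |>.1 hc with rfl | rfl
  · exact .inl (by rw [← h, one_smul])
  · exact .inr (by rw [← h, neg_one_smul])

theorem det3_eq (p q r : E3) : det3 p q r =
    p 0 * q 1 * r 2 - p 0 * q 2 * r 1 - p 1 * q 0 * r 2 + p 1 * q 2 * r 0 + p 2 * q 0 * r 1
      - p 2 * q 1 * r 0 := by
  simp [det3, Matrix.det_fin_three]

theorem det3_eq_dotProduct_cross (p q r : E3) : det3 p q r = ⇑r ⬝ᵥ (⇑p ⨯₃ ⇑q) := by
  rw [triple_product_permutation, triple_product_eq_det]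
  rfl

theorem det3_swap₁₂ (a b c : E3) : det3 b a c = -det3 a b c := by
  simp only [det3_eq]; ring

theorem det3_swap₂₃ (a b c : E3) : det3 a c b = -det3 a b c := by
  simp only [det3_eq]; ring

theorem det3_rotate (a b c : E3) : det3 b c a = det3 a b c := by
  simp only [det3_eq]; ring

theorem det3_neg₃ (a b c : E3) : det3 a b (-c) = -det3 a b c := by
  simp only [det3_eq, PiLp.neg_apply]; ring

theorem det3_self₁₃ (a b : E3) : det3 a b a = 0 := by
  simp only [det3_eq]; ring

theorem det3_self₂₃ (a b : E3) : det3 a b b = 0 := by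
  simp only [det3_eq]; ring

theorem det3_plucker (a b u v w : E3) :
    det3 a u w * det3 a b v = det3 a u v * det3 a b w + det3 a v w * det3 a b u := by
  simp only [det3_eq]; ring

theorem det3_pos_trans {a b u v w : E3} (hu : 0 < det3 a b u) (hv : 0 < det3 a b v)
    (hw : 0 < det3 a b w) (huv : 0 < det3 a u v) (hvw : 0 < det3 a v w) : 0 < det3 a u w := by
  refine (mul_pos_iff_of_pos_right hv).1 ?_
  rw [det3_plucker]
  positivity

theorem ProjGenPos.mono {P S : Set E3} (hP : ProjGenPos P) (hSP : S ⊆ P) : ProjGenPos S :=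
  fun p hp q hq r hr => hP p (hSP hp) q (hSP hq) r (hSP hr)

theorem ProjGenPos.det3_ne_zero {S : Set E3} (hS : ProjGenPos S) {a b u v : E3} (ha : a ∈ S)
    (hu : u ∈ S) (hv : v ∈ S) (huv : u ≠ v) (hbu : 0 < det3 a b u) (hbv : 0 < det3 a b v) :
    det3 a u v ≠ 0 := by
  have ne_a : ∀ x, 0 < det3 a b x → a ≠ x := by
    rintro x hx rfl
    exact hx.ne' (det3_self₁₃ a b)
  have ne_neg_a : ∀ x, 0 < det3 a b x → a ≠ -x := by
    intro x hx h
    obtain rfl := neg_eq_iff_eq_neg.1 h.symm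
    rw [det3_neg₃, det3_self₁₃, neg_zero] at hx
    exact hx.false
  intro h
  rcases hS a ha u hu v hv (ne_a u hbu) (ne_a v hbv) huv h with h | h | rfl
  · exact ne_neg_a u hbu h
  · exact ne_neg_a v hbv h
  · rw [det3_neg₃] at hbu
    linarith

def PreservesOrientation (S : Set E3) (f : E3 → E3) : Prop :=
  ∀ p ∈ S, ∀ q ∈ S, ∀ r ∈ S, sgn3 (f p) (f q) (f r) = sgn3 p q r

theorem PreservesOrientation.det3_pos_iff {S : Set E3} {f : E3 → E3}
    (hf : PreservesOrientation S f) {p q r : E3} (hp : p ∈ S) (hq : q ∈ S) (hr : r ∈ S) :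
    0 < det3 (f p) (f q) (f r) ↔ 0 < det3 p q r := by
  rw [← Real.sign_eq_one_iff, ← Real.sign_eq_one_iff]
  exact Eq.congr_left (hf p hp q hq r hr)

section FixedPoints

variable {S : Set E3} {f : E3 → E3} (hS : S.Finite) (hgp : ProjGenPos S)
  (hbij : Set.BijOn f S S) (hf : PreservesOrientation S f)
  {a b : E3} (ha : a ∈ S) (hb : b ∈ S) (hfa : f a = a) (hfb : f b = b)
include hS hgp hbij hf ha hb hfa hfb

theorem PreservesOrientation.eq_self_of_det3_pos {x : E3} (hx : x ∈ S) (hbx : 0 < det3 a b x) :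
    f x = x := by
  have half_space_bijOn := hbij.sep (Q := fun x => 0 < det3 a b x) fun x hx => by
    simpa only [hfa, hfb] using hf.det3_pos_iff ha hb hx
  refine half_space_bijOn.eqOn_id_of_strictTotal (hS.subset (Set.sep_subset _ _))
    (R := fun u v => 0 < det3 a u v) ?_ ?_ ?_ ?_ ⟨hx, hbx⟩
  · intro u hu v hv
    simpa only [hfa] using hf.det3_pos_iff ha hu.1 hv.1
  · exact fun u _ => (det3_self₂₃ a u).le.not_gt
  · exact fun u hu v hv w hw => det3_pos_trans hu.2 hv.2 hw.2
  · intro u hu v hv huv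
    rcases (hgp.det3_ne_zero ha hu.1 hv.1 huv hu.2 hv.2).lt_or_gt with h | h
    · exact .inr (by rw [det3_swap₂₃]; linarith)
    · exact .inl h

theorem PreservesOrientation.eq_self_of_det3_ne_zero {x : E3} (hx : x ∈ S)
    (hbx : det3 a b x ≠ 0) : f x = x := by
  rcases hbx.lt_or_gt with h | h
  · refine hf.eq_self_of_det3_pos hS hgp hbij hb ha hfb hfa hx ?_
    rw [det3_swap₁₂]
    linarith
  · exact hf.eq_self_of_det3_pos hS hgp hbij ha hb hfa hfb hx h

end FixedPoints

theorem exists_det3_ne_zero {S : Set E3} (hS : S ⊆ Metric.sphere 0 1)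
    (hngc : ¬ ∃ v : E3, v ≠ 0 ∧ ∀ p ∈ S, ⟪v, p⟫ = (0 : ℝ))
    {p q : E3} (hp : p ∈ S) (hq : q ∈ S) (hpq : p ≠ q) (hpnq : p ≠ -q) :
    ∃ r ∈ S, det3 p q r ≠ 0 := by
  have hnp := mem_sphere_zero_iff_norm.1 (hS hp)
  have hnq := mem_sphere_zero_iff_norm.1 (hS hq)
  have hindep : LinearIndependent ℝ ![⇑p, ⇑q] := by
    refine (LinearIndependent.pair_iff' ?_).2 fun c hc => ?_
    · exact fun h => by simp [show p = 0 from WithLp.ofLp_injective 2 h] at hnp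
    · rcases eq_or_eq_neg_of_smul_eq hnp hnq (c := c) (WithLp.ofLp_injective 2 hc) with rfl | rfl
      · exact hpq rfl
      · exact hpnq (neg_neg p).symm
  by_contra! hplane
  refine hngc ⟨WithLp.toLp 2 (⇑p ⨯₃ ⇑q), ?_, fun r hr => ?_⟩
  · simpa using crossProduct_ne_zero_iff_linearIndependent.2 hindep
  · rw [← hplane r hr, det3_eq_dotProduct_cross]
    rfl

/-- Let `S` be a subset of a projective set in general position, not
contained in a great circle, and `f` a symmetry of `S` fixing two distinct, non-antipodal
points `p, q ∈ S`. Then `f` is the identity on `S`. -/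
theorem stmt8 (P : Set E3) (hP : IsProjectiveSet P) (hgpP : ProjGenPos P)
    (S : Set E3) (hSP : S ⊆ P)
    (hngc : ¬ ∃ v : E3, v ≠ 0 ∧ ∀ p ∈ S, ⟪v, p⟫ = (0 : ℝ))
    (f : E3 → E3) (hbij : Set.BijOn f S S)
    (hpres : ∀ p ∈ S, ∀ q ∈ S, ∀ r ∈ S, sgn3 (f p) (f q) (f r) = sgn3 p q r)
    (p q : E3) (hp : p ∈ S) (hq : q ∈ S) (hpq : p ≠ q) (hpnq : p ≠ -q)
    (hfp : f p = p) (hfq : f q = q) :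
    Set.EqOn f id S := by
  have hS : S.Finite := hP.1.subset hSP
  have hgp : ProjGenPos S := hgpP.mono hSP
  have hf : PreservesOrientation S f := hpres
  obtain ⟨r, hr, hpqr⟩ := exists_det3_ne_zero (hSP.trans hP.2.1) hngc hp hq hpq hpnq
  have hfr : f r = r := hf.eq_self_of_det3_ne_zero hS hgp hbij hp hq hfp hfq hr hpqr
  intro x hx
  obtain hpqx | hpqx := ne_or_eq (det3 p q x) 0
  · exact hf.eq_self_of_det3_ne_zero hS hgp hbij hp hq hfp hfq hx hpqx
  obtain rfl | hxp := eq_or_ne x p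
  · exact hfp
  obtain rfl | hxq := eq_or_ne x q
  · exact hfq
  rcases hgp p hp q hq x hx hpq hxp.symm hxq.symm hpqx with h | h | h
  · exact absurd h hpnq
  · rw [neg_eq_iff_eq_neg.1 h.symm] at hx ⊢
    refine hf.eq_self_of_det3_ne_zero hS hgp hbij hq hr hfq hfr hx ?_
    rwa [det3_neg₃, det3_rotate, neg_ne_zero]
  · rw [neg_eq_iff_eq_neg.1 h.symm] at hx ⊢
    refine hf.eq_self_of_det3_ne_zero hS hgp hbij hp hr hfp hfr hx ?_
    rwa [det3_neg₃, det3_swap₂₃, neg_neg]
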